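/- arXiv:2310.04820 — 2 statements merged into one kernel-verified Lean document; each statement's English description precedes it below -/
import Mathlib

section
/- For every integer i ≥ 1, B_{2^{i−1}−1} = {0, 1, 2, …, 2^i − 2}, and consequently b_{2^{i−1}−1} = 2^i − 1. -/
/-!
A pair with `l₁ + l₂ ⋖ s` adds without carries inside the bits of `s`, so `l₁ + l₂ ≤ s` and hence
`2 l₁ + l₂ ≤ 2 s`. Conversely, for `s = 2ⁿ - 1` every splitting `l₁ + l₂ = s` satisfies
`l₁ + l₂ ⋖ s`, since `l₂` is the bitwise complement of `l₁` in `n` bits. Writing `k ≤ 2 s` as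
`2 (k - s) + (2 s - k)` when `k ≥ s`, and as `2 · 0 + k` otherwise, shows that every such `k` is
attained.
-/

/-- `Lessdot l₁ l₂ s` means `l₁ + l₂ ⋖ s`: for every bit position `i`,
the binary digits satisfy `(l₁)ᵢ + (l₂)ᵢ ≤ (s)ᵢ`. -/
def Lessdot (l₁ l₂ s : ℕ) : Prop :=
  ∀ i : ℕ, (l₁.testBit i).toNat + (l₂.testBit i).toNat ≤ (s.testBit i).toNat

open scoped Classical in
/-- `BSet r s = B_s^{(r)} = {2^r·l₁ + l₂ : l₁ + l₂ ⋖ s}`.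
(Note `l₁ + l₂ ⋖ s` forces `l₁, l₂ ≤ s`, so the ranges capture the whole set.) -/
noncomputable def BSet (r s : ℕ) : Finset ℕ :=
  ((Finset.range (s + 1) ×ˢ Finset.range (s + 1)).filter
    (fun p => Lessdot p.1 p.2 s)).image (fun p => 2 ^ r * p.1 + p.2)

/-- `Nnum r m = N_m^{(r)} = Σ_{s=0}^{2^m−1} |B_s^{(r)}|`. -/
noncomputable def Nnum (r m : ℕ) : ℕ := ∑ s ∈ Finset.range (2 ^ m), (BSet r s).card

namespace Lessdot

theorem div_two {a b s : ℕ} (h : Lessdot a b s) : Lessdot (a / 2) (b / 2) (s / 2) := fun i => by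
  simpa only [Nat.testBit_succ] using h (i + 1)

theorem mod_two_add_mod_two_le {a b s : ℕ} (h : Lessdot a b s) : a % 2 + b % 2 ≤ s % 2 := by
  simpa only [Nat.toNat_testBit, pow_zero, Nat.div_one] using h 0

theorem add_le {a b s : ℕ} (h : Lessdot a b s) : a + b ≤ s := by
  by_cases hab : a + b = 0
  · omega
  · have hhigh := h.div_two.add_le
    have hlow := h.mod_two_add_mod_two_le
    omega
termination_by a + b
decreasing_by omega

theorem zero_left {a b s : ℕ} (h : Lessdot a b s) : Lessdot 0 b s := fun i => by
  have := h i
  simp only [Nat.zero_testBit, Bool.toNat_false, zero_add]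
  omega

end Lessdot

theorem lessdot_two_pow_sub_one_of_add_eq {a b n : ℕ} (h : a + b = 2 ^ n - 1) :
    Lessdot a b (2 ^ n - 1) := by
  have ha : a < 2 ^ n := by
    have := Nat.one_le_two_pow (n := n)
    omega
  obtain rfl : b = 2 ^ n - (a + 1) := by omega
  intro i
  rw [Nat.testBit_two_pow_sub_succ ha, Nat.testBit_two_pow_sub_one]
  by_cases hi : i < n
  · cases a.testBit i <;> simp [hi]
  · have hai : a.testBit i = false :=
      Nat.testBit_lt_two_pow (ha.trans_le (Nat.pow_le_pow_right two_pos (not_lt.mp hi)))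
    simp [hi, hai]

theorem mem_BSet {r s k : ℕ} : k ∈ BSet r s ↔ ∃ l₁ l₂, Lessdot l₁ l₂ s ∧ 2 ^ r * l₁ + l₂ = k := by
  simp only [BSet, Finset.mem_image, Finset.mem_filter, Finset.mem_product, Finset.mem_range,
    Prod.exists]
  constructor
  · rintro ⟨l₁, l₂, ⟨-, h⟩, rfl⟩
    exact ⟨l₁, l₂, h, rfl⟩
  · rintro ⟨l₁, l₂, h, rfl⟩
    have := h.add_le
    exact ⟨l₁, l₂, ⟨⟨by omega, by omega⟩, h⟩, rfl⟩

theorem BSet_one_subset_range (s : ℕ) : BSet 1 s ⊆ Finset.range (2 * s + 1) := by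
  intro k hk
  obtain ⟨l₁, l₂, h, rfl⟩ := mem_BSet.mp hk
  have := h.add_le
  rw [Finset.mem_range]
  omega

theorem range_subset_BSet_one_two_pow_sub_one (n : ℕ) :
    Finset.range (2 * (2 ^ n - 1) + 1) ⊆ BSet 1 (2 ^ n - 1) := by
  set s := 2 ^ n - 1
  intro k hk
  rw [Finset.mem_range] at hk
  rw [mem_BSet]
  by_cases hks : s ≤ k
  · exact ⟨k - s, 2 * s - k, lessdot_two_pow_sub_one_of_add_eq (by omega), by omega⟩
  · exact ⟨0, k, (lessdot_two_pow_sub_one_of_add_eq (a := s - k) (by omega)).zero_left, by omega⟩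

theorem BSet_one_two_pow_sub_one (n : ℕ) : BSet 1 (2 ^ n - 1) = Finset.range (2 ^ (n + 1) - 1) := by
  have hrange : 2 ^ (n + 1) - 1 = 2 * (2 ^ n - 1) + 1 := by
    have := Nat.one_le_two_pow (n := n)
    rw [pow_succ]
    omega
  rw [hrange]
  exact (BSet_one_subset_range _).antisymm (range_subset_BSet_one_two_pow_sub_one n)

/-- For every integer `i ≥ 1`, `B_{2^{i−1}−1} = {0, 1, …, 2^i − 2}` and
consequently `b_{2^{i−1}−1} = 2^i − 1`. -/
theorem stmt_4 (i : ℕ) (hi : 1 ≤ i) :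
    BSet 1 (2 ^ (i - 1) - 1) = Finset.range (2 ^ i - 1) ∧
      (BSet 1 (2 ^ (i - 1) - 1)).card = 2 ^ i - 1 := by
  obtain ⟨n, rfl⟩ := Nat.exists_eq_add_of_le' hi
  rw [Nat.add_sub_cancel, BSet_one_two_pow_sub_one]
  exact ⟨rfl, Finset.card_range _⟩
end

section
/- For every integer m ≥ 0, N_m = ((1+√2)/2)·(2+√2)^m + ((1−√2)/2)·(2−√2)^m, as an identity of real numbers. -/
/-! Splitting off the lowest binary digits of `l₁, l₂, s` gives
`B_{2s+c} = {2w + d : w ∈ B_s, d ≤ 2c}` for `c ≤ 1`. Sorting such sets by parity, with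
`u_s := |B_s ∪ (B_s + 1)|`, yields `b_{2s} = b_s`, `b_{2s+1} = u_s + b_s`, `u_{2s} = 2 b_s` and
`u_{2s+1} = 2 u_s`. Hence `N_m` and `V_m := Σ_{s < 2^m} u_s` satisfy `N_{m+1} = 2 N_m + V_m`,
`V_{m+1} = 2 N_m + 2 V_m` with `N_0 = 1`, `V_0 = 2`, and the eigenvalues `2 ± √2` of this
linear recurrence give the closed form. -/

open Finset

lemma Nat.toNat_testBit_zero (n : ℕ) : (n.testBit 0).toNat = n % 2 := by
  rw [Nat.testBit_zero]
  rcases Nat.mod_two_eq_zero_or_one n with h | h <;> simp [h]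

lemma lessdot_iff {a b s : ℕ} :
    Lessdot a b s ↔ a % 2 + b % 2 ≤ s % 2 ∧ Lessdot (a / 2) (b / 2) (s / 2) := by
  unfold Lessdot
  rw [← Nat.and_forall_add_one]
  simp only [Nat.toNat_testBit_zero, Nat.testBit_div_two]

lemma Lessdot.le_left {a b s : ℕ} (h : Lessdot a b s) : a ≤ s :=
  Nat.le_of_testBit fun i hi => by
    have := h i
    revert this
    cases s.testBit i <;> simp [hi]

lemma Lessdot.symm {a b s : ℕ} (h : Lessdot a b s) : Lessdot b a s :=
  fun i => (add_comm _ _).trans_le (h i)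

lemma Lessdot.le_right {a b s : ℕ} (h : Lessdot a b s) : b ≤ s :=
  h.symm.le_left

lemma mem_BSet_one {s n : ℕ} : n ∈ BSet 1 s ↔ ∃ a b, Lessdot a b s ∧ 2 * a + b = n := by
  simp only [BSet, mem_image, mem_filter, mem_product, mem_range, Prod.exists, pow_one]
  constructor
  · rintro ⟨a, b, ⟨-, h⟩, rfl⟩
    exact ⟨a, b, h, rfl⟩
  · rintro ⟨a, b, h, rfl⟩
    exact ⟨a, b, ⟨⟨Nat.lt_succ_of_le h.le_left, Nat.lt_succ_of_le h.le_right⟩, h⟩, rfl⟩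

lemma BSet_one_zero : BSet 1 0 = {0} := by
  ext n
  simp only [mem_BSet_one, mem_singleton]
  constructor
  · rintro ⟨a, b, h, rfl⟩
    have := h.le_left
    have := h.le_right
    omega
  · rintro rfl
    exact ⟨0, 0, fun i => by simp, rfl⟩

def spread (B : Finset ℕ) (k : ℕ) : Finset ℕ := (B ×ˢ range (k + 1)).image fun p => p.1 + p.2

lemma mem_spread {B : Finset ℕ} {k x : ℕ} : x ∈ spread B k ↔ ∃ w ∈ B, w ≤ x ∧ x ≤ w + k := by
  simp only [spread, mem_image, mem_product, mem_range, Prod.exists]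
  constructor
  · rintro ⟨w, d, ⟨hw, hd⟩, rfl⟩
    exact ⟨w, hw, by omega, by omega⟩
  · rintro ⟨w, hw, h₁, h₂⟩
    exact ⟨w, x - w, ⟨hw, by omega⟩, by omega⟩

@[simp]
lemma spread_zero (B : Finset ℕ) : spread B 0 = B := by
  ext x
  simp only [mem_spread, add_zero]
  exact ⟨fun ⟨w, hw, h₁, h₂⟩ => le_antisymm h₂ h₁ ▸ hw, fun hx => ⟨x, hx, le_rfl, le_rfl⟩⟩

lemma spread_spread (B : Finset ℕ) (j k : ℕ) : spread (spread B j) k = spread B (j + k) := by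
  ext x
  simp only [mem_spread]
  constructor
  · rintro ⟨y, ⟨w, hw, h₁, h₂⟩, h₃, h₄⟩
    exact ⟨w, hw, by omega, by omega⟩
  · rintro ⟨w, hw, h₁, h₂⟩
    exact ⟨min x (w + j), ⟨w, hw, by omega, by omega⟩, by omega, by omega⟩

lemma spread_image_double_succ (B : Finset ℕ) (k : ℕ) :
    spread (B.image (2 * ·)) (k + 1) =
      (spread B ((k + 1) / 2)).image (2 * ·) ∪ (spread B (k / 2)).image (2 * · + 1) := by
  ext x
  simp only [mem_union, mem_image, mem_spread, exists_exists_and_eq_and]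
  constructor
  · rintro ⟨w, hw, h₁, h₂⟩
    rcases Nat.even_or_odd' x with ⟨y, rfl | rfl⟩
    · exact Or.inl ⟨y, ⟨w, hw, by omega, by omega⟩, rfl⟩
    · exact Or.inr ⟨y, ⟨w, hw, by omega, by omega⟩, rfl⟩
  · rintro (⟨y, ⟨w, hw, h₁, h₂⟩, rfl⟩ | ⟨y, ⟨w, hw, h₁, h₂⟩, rfl⟩) <;>
      exact ⟨w, hw, by omega, by omega⟩

lemma card_image_double_union_image_double_add_one (C D : Finset ℕ) :
    (C.image (2 * ·) ∪ D.image (2 * · + 1)).card = C.card + D.card := by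
  rw [card_union_of_disjoint, card_image_of_injective _ fun x y h => by omega,
    card_image_of_injective _ fun x y h => by omega]
  simp only [disjoint_left, mem_image]
  rintro _ ⟨x, -, rfl⟩ ⟨y, -, h⟩
  omega

lemma card_spread_image_double_succ (B : Finset ℕ) (k : ℕ) :
    (spread (B.image (2 * ·)) (k + 1)).card =
      (spread B ((k + 1) / 2)).card + (spread B (k / 2)).card := by
  rw [spread_image_double_succ, card_image_double_union_image_double_add_one]

lemma BSet_one_bit {s c : ℕ} (hc : c ≤ 1) :
    BSet 1 (2 * s + c) = spread ((BSet 1 s).image (2 * ·)) (2 * c) := by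
  ext n
  simp only [mem_spread, mem_image, exists_exists_and_eq_and, mem_BSet_one]
  have hs : (2 * s + c) / 2 = s := by omega
  have hc' : (2 * s + c) % 2 = c := by omega
  constructor
  · rintro ⟨a, b, h, rfl⟩
    rw [lessdot_iff, hs, hc'] at h
    exact ⟨2 * (a / 2) + b / 2, ⟨a / 2, b / 2, h.2, rfl⟩, by omega, by omega⟩
  · rintro ⟨_, ⟨a, b, h, rfl⟩, h₁, h₂⟩
    -- `d ≤ 2c` splits into the new lowest digits `d / 2` of `l₁` and `d % 2` of `l₂`
    set d := n - 2 * (2 * a + b)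
    refine ⟨2 * a + d / 2, 2 * b + d % 2, lessdot_iff.2 ⟨by omega, ?_⟩, by omega⟩
    rwa [hs, show (2 * a + d / 2) / 2 = a by omega, show (2 * b + d % 2) / 2 = b by omega]

lemma card_BSet_one_double (s : ℕ) : (BSet 1 (2 * s)).card = (BSet 1 s).card := by
  rw [← add_zero (2 * s), BSet_one_bit (Nat.zero_le 1), mul_zero, spread_zero,
    card_image_of_injective _ fun x y h => by omega]

lemma card_BSet_one_double_add_one (s : ℕ) :
    (BSet 1 (2 * s + 1)).card = (spread (BSet 1 s) 1).card + (BSet 1 s).card := by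
  rw [BSet_one_bit le_rfl, card_spread_image_double_succ]
  simp only [Nat.reduceAdd, Nat.reduceDiv, spread_zero]

lemma card_spread_BSet_one_bit {s c : ℕ} (hc : c ≤ 1) :
    (spread (BSet 1 (2 * s + c)) 1).card = 2 * (spread (BSet 1 s) c).card := by
  rw [BSet_one_bit hc, spread_spread, card_spread_image_double_succ,
    show (2 * c + 1) / 2 = c by omega, show 2 * c / 2 = c by omega, two_mul]

lemma card_spread_BSet_one_double (s : ℕ) :
    (spread (BSet 1 (2 * s)) 1).card = 2 * (BSet 1 s).card := by
  simpa using card_spread_BSet_one_bit (s := s) (Nat.zero_le 1)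

lemma Finset.sum_range_two_mul {M : Type*} [AddCommMonoid M] (f : ℕ → M) (n : ℕ) :
    ∑ i ∈ range (2 * n), f i = ∑ i ∈ range n, (f (2 * i) + f (2 * i + 1)) := by
  induction n with
  | zero => simp
  | succ n ih => rw [mul_add_one, sum_range_succ, sum_range_succ, sum_range_succ, ih, add_assoc]

noncomputable def spreadCount (m : ℕ) : ℕ := ∑ s ∈ range (2 ^ m), (spread (BSet 1 s) 1).card

lemma Nnum_one_succ (m : ℕ) : Nnum 1 (m + 1) = 2 * Nnum 1 m + spreadCount m := by
  rw [Nnum, Nnum, spreadCount, pow_succ', sum_range_two_mul]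
  simp only [card_BSet_one_double, card_BSet_one_double_add_one, sum_add_distrib]
  ring

lemma spreadCount_succ (m : ℕ) : spreadCount (m + 1) = 2 * Nnum 1 m + 2 * spreadCount m := by
  rw [Nnum, spreadCount, spreadCount, pow_succ', sum_range_two_mul]
  simp only [card_spread_BSet_one_double, card_spread_BSet_one_bit le_rfl, sum_add_distrib,
    mul_sum]

lemma Nnum_one_zero : Nnum 1 0 = 1 := by
  rw [Nnum, pow_zero, sum_range_one, BSet_one_zero, card_singleton]

lemma spreadCount_zero : spreadCount 0 = 2 := by
  rw [spreadCount, pow_zero, sum_range_one, BSet_one_zero]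
  decide

lemma closed_form_of_recurrence {x y : ℕ → ℝ} (hx₀ : x 0 = 1) (hy₀ : y 0 = 2)
    (hx : ∀ m, x (m + 1) = 2 * x m + y m) (hy : ∀ m, y (m + 1) = 2 * x m + 2 * y m) (m : ℕ) :
    x m = (1 + √2) / 2 * (2 + √2) ^ m + (1 - √2) / 2 * (2 - √2) ^ m ∧
      y m = ((2 + √2) ^ (m + 1) + (2 - √2) ^ (m + 1)) / 2 := by
  have h2 : √2 ^ 2 = 2 := Real.sq_sqrt zero_le_two
  induction m with
  | zero =>
    rw [hx₀, hy₀]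
    constructor <;> ring
  | succ m ih =>
    rw [hx, hy, ih.1, ih.2]
    constructor <;> linear_combination (-((2 + √2) ^ m + (2 - √2) ^ m) / 2) * h2

/-- For every `m ≥ 0`,
`N_m = ((1+√2)/2)·(2+√2)^m + ((1−√2)/2)·(2−√2)^m` as real numbers. -/
theorem stmt_8 (m : ℕ) :
    (Nnum 1 m : ℝ) =
      (1 + Real.sqrt 2) / 2 * (2 + Real.sqrt 2) ^ m +
        (1 - Real.sqrt 2) / 2 * (2 - Real.sqrt 2) ^ m :=
  (closed_form_of_recurrence (x := fun m => (Nnum 1 m : ℝ)) (y := fun m => (spreadCount m : ℝ))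
    (by simp [Nnum_one_zero]) (by simp [spreadCount_zero])
    (fun m => by simp [Nnum_one_succ]) (fun m => by simp [spreadCount_succ]) m).1
end
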